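/- Let T be an essentially small monoidal triangulated category with noetherian spectrum and let (X, σ) be a classifying support datum on T. Then the universal map f_σ : X → Spc(T) defined by f_σ(x) = {t ∈ T : x ∉ σ(t)} is a homeomorphism. -/

import Mathlib

open CategoryTheory CategoryTheory.Limits CategoryTheory.Pretriangulated
  CategoryTheory.MonoidalCategory TopologicalSpace ZeroObject

universe v u

variable (C : Type u) [Category.{v} C] [HasZeroObject C] [Preadditive C]
  [HasShift C ℤ] [∀ n : ℤ, (shiftFunctor C n).Additive] [Pretriangulated C]
  [HasBinaryBiproducts C] [MonoidalCategory C] [EssentiallySmall.{v} C]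
  [∀ X : C, (tensorLeft X).CommShift ℤ] [∀ X : C, (tensorRight X).CommShift ℤ]
  [∀ X : C, (tensorLeft X).IsTriangulated] [∀ X : C, (tensorRight X).IsTriangulated]

/-- A thick two-sided tensor ideal of a monoidal triangulated category:
a thick (triangulated, closed under direct summands) subcategory, closed under
left and right tensoring by arbitrary objects. -/
structure ThickIdeal : Type (max u v) where
  carrier : Set C
  zero_mem : (0 : C) ∈ carrier
  iso_closed : ∀ {a b : C}, (a ≅ b) → a ∈ carrier → b ∈ carrier
  shift_mem : ∀ (a : C) (n : ℤ), a ∈ carrier → (a⟦n⟧ : C) ∈ carrier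
  ext₂ : ∀ T : Triangle C, (T ∈ distTriang C) →
    T.obj₁ ∈ carrier → T.obj₃ ∈ carrier → T.obj₂ ∈ carrier
  summand_mem : ∀ a b : C, (a ⊞ b) ∈ carrier → a ∈ carrier
  tensor_left_mem : ∀ a x : C, a ∈ carrier → (x ⊗ a) ∈ carrier
  tensor_right_mem : ∀ a x : C, a ∈ carrier → (a ⊗ x) ∈ carrier

namespace ThickIdeal

variable {C}

/-- A thick two-sided ideal is proper if it is not all of `C`. -/
def IsProper (P : ThickIdeal C) : Prop := P.carrier ≠ Set.univ

/-- A prime ideal: a proper thick two-sided ideal `P` such that `I ⊗ J ⊆ P`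
implies `I ⊆ P` or `J ⊆ P` for all thick two-sided ideals `I`, `J`.
(Since `P` is a thick two-sided ideal, `I ⊗ J ⊆ P` is equivalent to all
elementwise tensor products lying in `P`.) -/
def IsPrime (P : ThickIdeal C) : Prop :=
  P.IsProper ∧ ∀ I J : ThickIdeal C,
    (∀ i ∈ I.carrier, ∀ j ∈ J.carrier, (i ⊗ j) ∈ P.carrier) →
      I.carrier ⊆ P.carrier ∨ J.carrier ⊆ P.carrier

/-- A semiprime ideal: an intersection of prime ideals. -/
def IsSemiprime (J : ThickIdeal C) : Prop :=
  ∃ S : Set (ThickIdeal C), (∀ P ∈ S, P.IsPrime) ∧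
    J.carrier = ⋂ P ∈ S, P.carrier

end ThickIdeal

/-- The noncommutative Balmer spectrum: the set of prime thick two-sided ideals. -/
def Spc : Type (max u v) := {P : ThickIdeal C // P.IsPrime}

/-- The topology on `Spc C` generated by declaring the sets
`V(S) = {P : P ∩ S = ∅}` to be closed, i.e. their complements
`U(S) = {P : P ∩ S ≠ ∅}` to be open. -/
instance : TopologicalSpace (Spc C) :=
  generateFrom
    {U : Set (Spc C) | ∃ S : Set C, U = {P : Spc C | (P.1.carrier ∩ S).Nonempty}}

/-- The small noncommutative support of an object. -/
def supp (t : C) : Set (Spc C) := {P : Spc C | t ∉ P.1.carrier}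

/-- The support of a collection of objects. -/
def suppSet (E : Set C) : Set (Spc C) := ⋃ t ∈ E, supp C t

/-- A Thomason subset: a union of closed subsets with quasi-compact complements. -/
def IsThomason (Y : Set (Spc C)) : Prop :=
  ∃ 𝒴 : Set (Set (Spc C)), Y = ⋃₀ 𝒴 ∧ ∀ Z ∈ 𝒴, IsClosed Z ∧ IsCompact Zᶜ

/-- A support datum on `C` with values in the topological space `X`. -/
structure SupportDatum (X : Type*) [TopologicalSpace X] where
  σ : C → Set X
  isClosed_σ : ∀ t : C, IsClosed (σ t)
  σ_zero : σ 0 = ∅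
  σ_unit : σ (𝟙_ C) = Set.univ
  σ_sum : ∀ a b : C, σ (a ⊞ b) = σ a ∪ σ b
  σ_shift : ∀ a : C, σ (a⟦(1 : ℤ)⟧) = σ a
  σ_triangle : ∀ T : Triangle C, (T ∈ distTriang C) →
    σ T.obj₁ ⊆ σ T.obj₂ ∪ σ T.obj₃
  σ_tensor : ∀ a b : C, (⋃ c : C, σ (a ⊗ c ⊗ b)) = σ a ∩ σ b

/-- A specialisation closed subset: a union of closed subsets. -/
def IsSpecClosed {X : Type*} [TopologicalSpace X] (Y : Set X) : Prop :=
  ∃ 𝒴 : Set (Set X), Y = ⋃₀ 𝒴 ∧ ∀ Z ∈ 𝒴, IsClosed Z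

/-- A classifying support datum: the space `X` is noetherian and spectral, and
`Θ(Y) = {t : σ(t) ⊆ Y}` is a bijection from specialisation closed subsets of `X`
to thick two-sided semiprime ideals of `C`, with inverse `J ↦ ⋃_{j ∈ J} σ(j)`. -/
structure ClassifyingSupportDatum (X : Type*) [TopologicalSpace X]
    extends SupportDatum C X where
  noetherian : NoetherianSpace X
  compact : CompactSpace X
  t0 : T0Space X
  basis : IsTopologicalBasis {U : Set X | IsOpen U ∧ IsCompact U}
  qc_inter : ∀ U V : Set X, IsOpen U → IsCompact U → IsOpen V → IsCompact V →
    IsCompact (U ∩ V)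
  sober : QuasiSober X
  theta_semiprime : ∀ Y : Set X, IsSpecClosed Y →
    ∃ J : ThickIdeal C, J.IsSemiprime ∧ J.carrier = {t : C | σ t ⊆ Y}
  theta_leftInv : ∀ Y : Set X, IsSpecClosed Y →
    (⋃ t ∈ {t : C | σ t ⊆ Y}, σ t) = Y
  sigma_specClosed : ∀ J : ThickIdeal C, J.IsSemiprime →
    IsSpecClosed (⋃ j ∈ J.carrier, σ j)
  theta_rightInv : ∀ J : ThickIdeal C, J.IsSemiprime →
    {t : C | σ t ⊆ ⋃ j ∈ J.carrier, σ j} = J.carrier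

/-- The alternating tensor product `r 0 ⊗ c 0 ⊗ r 1 ⊗ c 1 ⊗ ⋯ ⊗ c (n-1) ⊗ r n`. -/
def altTensor : ∀ (n : ℕ), (Fin (n + 1) → C) → (Fin n → C) → C
  | 0, r, _ => r 0
  | n + 1, r, c =>
      altTensor n (fun i => r i.castSucc) (fun i => c i.castSucc) ⊗
        (c (Fin.last n) ⊗ r (Fin.last (n + 1)))

/-!
Write `f` for `f_σ`, so that `σ t = f⁻¹(supp t)` and `f` is continuous. Applying `Θ` to the
closure of a point shows that every `closure {x}` is some `σ t`. As `X` is `T₀`, this makes `f`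
injective; as `X` is noetherian and sober, every closed set is a finite union of sets `σ t`, whose
images `supp t` are closed, so `f` is a closed map once it is surjective.

For surjectivity, given a prime `P`, noetherianity provides `s ∉ P` with `σ s` minimal. For `t ∉ P`
primality gives some `s ⊗ c ⊗ t ∉ P`, and `σ (s ⊗ c ⊗ t) ⊆ σ s ∩ σ t`, so `σ s ⊆ σ t`. Since `P` is
semiprime, `Θ(σ(P)) = P`, so `σ s` is not covered by `σ(P)`; any point of `σ s` outside `σ(P)`
is sent to `P`.
-/

namespace ThickIdeal

variable {C}

lemma carrier_injective : Function.Injective (carrier : ThickIdeal C → Set C) := by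
  rintro ⟨⟩ ⟨⟩ rfl
  rfl

lemma IsPrime.isSemiprime {P : ThickIdeal C} (hP : P.IsPrime) : P.IsSemiprime :=
  ⟨{P}, by simpa using hP, by simp⟩

def comap (P : ThickIdeal C) {K : Type*} (G : K → C ⥤ C)
    [∀ k, (G k).CommShift ℤ] [∀ k, (G k).IsTriangulated]
    (hL : ∀ a x : C, (∀ k, (G k).obj a ∈ P.carrier) → ∀ k, (G k).obj (x ⊗ a) ∈ P.carrier)
    (hR : ∀ a x : C, (∀ k, (G k).obj a ∈ P.carrier) → ∀ k, (G k).obj (a ⊗ x) ∈ P.carrier) :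
    ThickIdeal C where
  carrier := {a : C | ∀ k, (G k).obj a ∈ P.carrier}
  zero_mem k := P.iso_closed (G k).mapZeroObject.symm P.zero_mem
  iso_closed e h k := P.iso_closed ((G k).mapIso e) (h k)
  shift_mem a n h k := P.iso_closed (((G k).commShiftIso n).app a).symm (P.shift_mem _ n (h k))
  ext₂ T hT h₁ h₃ k :=
    P.ext₂ ((G k).mapTriangle.obj T) ((G k).map_distinguished T hT) (h₁ k) (h₃ k)
  summand_mem a b h k := by
    have := preservesBinaryBiproducts_of_preservesBinaryProducts (G k)
    exact P.summand_mem _ _ (P.iso_closed ((G k).mapBiprod a b) (h k))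
  tensor_left_mem := hL
  tensor_right_mem := hR

/-- The ideals `I = {u | ∀ c, u ⊗ c ⊗ b ∈ P}` and `J = {v | ∀ i ∈ I, i ⊗ v ∈ P}` satisfy
`I ⊗ J ⊆ P`, `a ∈ I` and `b ∈ J`. -/
lemma IsPrime.mem_or_mem_of_tensor_mem {P : ThickIdeal C} (hP : P.IsPrime) {a b : C}
    (h : ∀ c : C, a ⊗ c ⊗ b ∈ P.carrier) : a ∈ P.carrier ∨ b ∈ P.carrier := by
  let I := P.comap (fun c : C => tensorRight (c ⊗ b))
    (fun u x hu c => P.iso_closed (α_ x u (c ⊗ b)).symm (P.tensor_left_mem _ x (hu c)))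
    (fun u x hu c =>
      P.iso_closed (whiskerLeftIso u (α_ x c b) ≪≫ (α_ u x (c ⊗ b)).symm) (hu (x ⊗ c)))
  let J := P.comap (fun i : I.carrier => tensorLeft i.1)
    (fun u x hu i => P.iso_closed (α_ i.1 x u) (hu ⟨i.1 ⊗ x, I.tensor_right_mem i.1 x i.2⟩))
    (fun u x hu i => P.iso_closed (α_ i.1 u x) (P.tensor_right_mem _ x (hu i)))
  have haI : a ∈ I.carrier := h
  have hbJ : b ∈ J.carrier := fun i => P.iso_closed (whiskerLeftIso i.1 (λ_ b)) (i.2 (𝟙_ C))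
  exact (hP.2 I J fun i hi j hj => hj ⟨i, hi⟩).imp (· haI) (· hbJ)

end ThickIdeal

lemma setOf_inter_nonempty_eq (S : Set C) :
    {P : Spc C | (P.1.carrier ∩ S).Nonempty} = ⋃ t ∈ S, (supp C t)ᶜ := by
  ext P
  simp [supp, Set.Nonempty, and_comm]

lemma isClosed_supp (t : C) : IsClosed (supp C t) := by
  rw [← isOpen_compl_iff]
  have h := setOf_inter_nonempty_eq C {t}
  rw [Set.biUnion_singleton] at h
  exact h ▸ isOpen_generateFrom_of_mem ⟨{t}, rfl⟩

namespace SupportDatum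

variable {C} {X : Type*} [TopologicalSpace X] (D : SupportDatum C X)

lemma σ_tensor_subset (a c b : C) : D.σ (a ⊗ c ⊗ b) ⊆ D.σ a ∩ D.σ b :=
  D.σ_tensor a b ▸ Set.subset_iUnion (fun c => D.σ (a ⊗ c ⊗ b)) c

lemma exists_notMem_forall_σ_subset [NoetherianSpace X] {P : ThickIdeal C} (hP : P.IsPrime) :
    ∃ s ∉ P.carrier, ∀ t ∉ P.carrier, D.σ s ⊆ D.σ t := by
  obtain ⟨t₀, ht₀⟩ := (Set.ne_univ_iff_exists_notMem _).mp hP.1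
  let σc (t : C) : Closeds X := ⟨D.σ t, D.isClosed_σ t⟩
  obtain ⟨s, hsP, hmin⟩ :=
    (InvImage.wf σc wellFounded_lt).has_min {t | t ∉ P.carrier} ⟨t₀, ht₀⟩
  refine ⟨s, hsP, fun t htP => ?_⟩
  obtain ⟨c, hc⟩ : ∃ c, s ⊗ c ⊗ t ∉ P.carrier := by
    by_contra! h
    exact (hP.mem_or_mem_of_tensor_mem h).elim hsP htP
  have hle : σc (s ⊗ c ⊗ t) ≤ σc s := fun x hx => (D.σ_tensor_subset s c t hx).1
  have heq : D.σ (s ⊗ c ⊗ t) = D.σ s := congrArg SetLike.coe (hle.eq_of_not_lt (hmin _ hc))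
  exact heq ▸ fun x hx => (D.σ_tensor_subset s c t hx).2

variable {f : X → Spc C}

lemma preimage_supp (hf : ∀ x : X, (f x).1.carrier = {t : C | x ∉ D.σ t}) (t : C) :
    f ⁻¹' supp C t = D.σ t := by
  ext x
  simp [supp, hf]

lemma continuous_of_carrier_eq (hf : ∀ x : X, (f x).1.carrier = {t : C | x ∉ D.σ t}) :
    Continuous f := by
  rw [continuous_generateFrom_iff]
  rintro _ ⟨S, rfl⟩
  simp only [setOf_inter_nonempty_eq, Set.preimage_iUnion₂, Set.preimage_compl,
    D.preimage_supp hf]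
  exact isOpen_biUnion fun t _ => (D.isClosed_σ t).isOpen_compl

end SupportDatum

namespace ClassifyingSupportDatum

variable {C} {X : Type*} [TopologicalSpace X] (D : ClassifyingSupportDatum C X)

lemma exists_σ_eq_closure_singleton (x : X) : ∃ t : C, D.σ t = closure {x} := by
  have hx : x ∈ ⋃ t ∈ {t : C | D.σ t ⊆ closure {x}}, D.σ t := by
    rw [D.theta_leftInv _ ⟨{closure {x}}, by simp, by simp⟩]
    exact subset_closure rfl
  obtain ⟨t, ht, hxt⟩ := Set.mem_iUnion₂.mp hx
  exact ⟨t, ht.antisymm (closure_minimal (Set.singleton_subset_iff.2 hxt) (D.isClosed_σ t))⟩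

lemma exists_σ_eq_of_isIrreducible {Z : Set X} (hZ : IsIrreducible Z) (hZc : IsClosed Z) :
    ∃ t : C, D.σ t = Z := by
  have := D.sober
  obtain ⟨t, ht⟩ := D.exists_σ_eq_closure_singleton hZ.genericPoint
  exact ⟨t, ht.trans (hZ.isGenericPoint_genericPoint hZc).def⟩

variable {f : X → Spc C}

lemma injective (hf : ∀ x : X, (f x).1.carrier = {t : C | x ∉ D.σ t}) :
    Function.Injective f := by
  have := D.t0
  have specializes_of_eq {x y : X} (hxy : f x = f y) : x ⤳ y := by
    obtain ⟨t, ht⟩ := D.exists_σ_eq_closure_singleton x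
    have hx : x ∈ D.σ t := ht ▸ subset_closure rfl
    rw [← D.preimage_supp hf] at hx ht
    rw [specializes_iff_mem_closure, ← ht]
    exact Set.mem_preimage.2 (hxy ▸ hx)
  exact fun x y hxy => (specializes_of_eq hxy).antisymm (specializes_of_eq hxy.symm) |>.eq

lemma surjective (hf : ∀ x : X, (f x).1.carrier = {t : C | x ∉ D.σ t}) :
    Function.Surjective f := by
  have := D.noetherian
  intro P
  obtain ⟨s, hsP, hσs⟩ := D.exists_notMem_forall_σ_subset P.2
  have hcover : ¬ D.σ s ⊆ ⋃ j ∈ P.1.carrier, D.σ j := fun h =>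
    hsP (D.theta_rightInv P.1 P.2.isSemiprime ▸ h)
  obtain ⟨x, hxs, hxP⟩ := Set.not_subset.mp hcover
  refine ⟨x, Subtype.ext (ThickIdeal.carrier_injective ?_)⟩
  rw [hf]
  ext t
  exact ⟨fun hx => by_contra fun ht => hx (hσs t ht hxs), fun ht hx => hxP (Set.mem_biUnion ht hx)⟩

lemma isClosedMap (hf : ∀ x : X, (f x).1.carrier = {t : C | x ∉ D.σ t}) : IsClosedMap f := by
  have := D.noetherian
  intro F hF
  obtain ⟨S, hSfin, hScl, hSirr, rfl⟩ := NoetherianSpace.exists_finite_set_isClosed_irreducible hF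
  rw [Set.sUnion_eq_biUnion, Set.image_iUnion₂]
  refine hSfin.isClosed_biUnion fun Z hZ => ?_
  obtain ⟨t, rfl⟩ := D.exists_σ_eq_of_isIrreducible (hSirr Z hZ) (hScl Z hZ)
  rw [← D.preimage_supp hf, Set.image_preimage_eq _ (D.surjective hf)]
  exact isClosed_supp C t

end ClassifyingSupportDatum

theorem statement2 {X : Type*} [TopologicalSpace X]
    (D : ClassifyingSupportDatum C X)
    (f : X → Spc C) (hf : ∀ x : X, (f x).1.carrier = {t : C | x ∉ D.σ t}) :
    ∃ h : X ≃ₜ Spc C, ⇑h = f :=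
  ⟨(Equiv.ofBijective f ⟨D.injective hf, D.surjective hf⟩).toHomeomorphOfContinuousClosed
    (D.continuous_of_carrier_eq hf) (D.isClosedMap hf), rfl⟩
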